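/- arXiv:1104.0983 — 4 statements merged into one kernel-verified Lean document; each statement's English description precedes it below -/
import Mathlib

section
/- Duhamel's formula: for n×n complex matrices A and B, e^{A+B} = e^A + ∫₀¹ e^{tA} B e^{(1-t)(A+B)} dt. -/
open Matrix MeasureTheory

attribute [local instance] Matrix.linftyOpNormedRing Matrix.linftyOpNormedAlgebra

/-!
The path `t ↦ exp (t • a) * exp ((1 - t) • b)` runs from `exp b` to `exp a` and has derivative
`exp (t • a) * (a - b) * exp ((1 - t) • b)`; integrating this derivative over `[0, 1]` gives the
formula, in any complete normed `ℝ`-algebra.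
-/

section Duhamel

variable {𝔸 : Type*} [NormedRing 𝔸] [NormedAlgebra ℝ 𝔸] [CompleteSpace 𝔸]

theorem continuous_exp_smul_const (x : 𝔸) : Continuous fun u : ℝ => NormedSpace.exp (u • x) :=
  continuous_iff_continuousAt.2 fun u => (hasDerivAt_exp_smul_const x u).continuousAt

theorem hasDerivAt_exp_smul_mul_exp_one_sub_smul (a b : 𝔸) (t : ℝ) :
    HasDerivAt (fun u : ℝ => NormedSpace.exp (u • a) * NormedSpace.exp ((1 - u) • b))
      (NormedSpace.exp (t • a) * (a - b) * NormedSpace.exp ((1 - t) • b)) t := by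
  have hb : HasDerivAt (fun u : ℝ => NormedSpace.exp ((1 - u) • b))
      (-(b * NormedSpace.exp ((1 - t) • b))) t := by
    have := (hasDerivAt_exp_smul_const' b (1 - t)).scomp t ((hasDerivAt_id t).const_sub 1)
    rwa [neg_one_smul] at this
  refine ((hasDerivAt_exp_smul_const a t).mul hb).congr_deriv ?_
  rw [mul_neg, ← mul_assoc, ← sub_eq_add_neg, mul_sub, sub_mul]

theorem exp_eq_exp_add_integral_exp_smul_mul_sub_mul (a b : 𝔸) :
    NormedSpace.exp b = NormedSpace.exp a +
      ∫ t in (0:ℝ)..1, NormedSpace.exp (t • a) * (b - a) * NormedSpace.exp ((1 - t) • b) := by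
  have hcont : Continuous fun t : ℝ =>
      NormedSpace.exp (t • a) * (a - b) * NormedSpace.exp ((1 - t) • b) :=
    ((continuous_exp_smul_const a).mul continuous_const).mul
      ((continuous_exp_smul_const b).comp (continuous_const.sub continuous_id))
  have hftc := intervalIntegral.integral_eq_sub_of_hasDerivAt
    (fun t _ => hasDerivAt_exp_smul_mul_exp_one_sub_smul a b t) (hcont.intervalIntegrable 0 1)
  simp only [one_smul, zero_smul, sub_zero, sub_self, NormedSpace.exp_zero, mul_one,
    one_mul] at hftc
  rw [← neg_sub a b]
  simp only [mul_neg, neg_mul, intervalIntegral.integral_neg, hftc]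
  abel

end Duhamel

theorem duhamel_formula {n : ℕ} (A B : Matrix (Fin n) (Fin n) ℂ) :
    NormedSpace.exp (A + B) = NormedSpace.exp A +
      ∫ t in (0:ℝ)..1,
        NormedSpace.exp (t • A) * B * NormedSpace.exp ((1 - t) • (A + B)) := by
  have h := exp_eq_exp_add_integral_exp_smul_mul_sub_mul A (A + B)
  rw [add_sub_cancel_left] at h
  exact h
end

section
/- Iterated Duhamel expansion: for n×n complex matrices A and B, e^{A+B} = ∑_{k≥0} ∫_{0<t₁<⋯<t_k<1} e^{t₁A} B e^{(t₂-t₁)A} B ⋯ B e^{(1-t_k)A} dt₁⋯dt_k, where the series converges absolutely in operator norm. -/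
open Matrix MeasureTheory

attribute [local instance] Matrix.linftyOpNormedRing Matrix.linftyOpNormedAlgebra

/-- `duhamelChain A B k t s` is the product
`e^{(t₁-s)A} B e^{(t₂-t₁)A} B ⋯ B e^{(1-t_k)A}` where `t₁, …, t_k` are `t 0, …, t (k-1)`. -/
noncomputable def duhamelChain {n : ℕ} (A B : Matrix (Fin n) (Fin n) ℂ) :
    ℕ → (ℕ → ℝ) → ℝ → Matrix (Fin n) (Fin n) ℂ
  | 0, _, s => NormedSpace.exp ((1 - s) • A)
  | (k+1), t, s =>
      NormedSpace.exp ((t 0 - s) • A) * B *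
        duhamelChain A B k (fun i => t (i + 1)) (t 0)

/-- The open simplex `{0 < t₁ < t₂ < ⋯ < t_k < 1}`. -/
def duhamelSimplex (k : ℕ) : Set (Fin k → ℝ) :=
  {t | (∀ i, 0 < t i ∧ t i < 1) ∧ StrictMono t}

/-- The integrand of the `k`-th Duhamel term, as a function of `t : Fin k → ℝ`. -/
noncomputable def duhamelIntegrand {n : ℕ} (A B : Matrix (Fin n) (Fin n) ℂ) (k : ℕ)
    (t : Fin k → ℝ) : Matrix (Fin n) (Fin n) ℂ :=
  duhamelChain A B k (fun i => if h : i < k then t ⟨i, h⟩ else 0) 0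

/-!
Let `R_k(s)` be the integral over `{s < t₀ < ⋯ < t_{k-1} < 1}` of
`e^{(t₀-s)A} B e^{(t₁-t₀)A} B ⋯ B e^{(1-t_{k-1})(A+B)}`, and `I_k(s)` the same integral with last
factor `e^{(1-t_{k-1})A}`. Integrating out `t₀` shows that both satisfy the Volterra recursion
`X_{k+1}(s) = ∫_s^1 e^{(u-s)A} B X_k(u) du`, while differentiating `u ↦ e^{(u-s)A} e^{(1-u)(A+B)}`
gives Duhamel's formula `R_0 = I_0 + R_1`. Induction then yields `R_k = I_k + R_{k+1}`, hence
`e^{A+B} = I_0(0) + ⋯ + I_{N-1}(0) + R_N(0)`. On `[0, 1]` the factors `e^{uA}`, `e^{u(A+B)}` are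
bounded by some `K`, and the simplex has volume `1/k!`, so the `k`-th integrand has an integral of
norm at most `K (K‖B‖)^k / k!`: the series converges absolutely and `R_N(0) → 0`.
-/

open NormedSpace Set Filter Topology
open scoped Nat

def orderedSimplex (k : ℕ) (s : ℝ) : Set (Fin k → ℝ) :=
  {t | (∀ i, s < t i ∧ t i < 1) ∧ StrictMono t}

namespace orderedSimplex

variable {k : ℕ} {s : ℝ}

lemma zero_eq_univ : orderedSimplex 0 s = univ :=
  eq_univ_of_forall fun _ => ⟨finZeroElim, fun i => i.elim0⟩

lemma subset_Icc : orderedSimplex k s ⊆ Icc (fun _ => s) (fun _ => 1) :=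
  fun _ ht => ⟨fun i => (ht.1 i).1.le, fun i => (ht.1 i).2.le⟩

lemma mem_succ {t : Fin (k + 1) → ℝ} :
    t ∈ orderedSimplex (k + 1) s ↔
      t 0 ∈ Ioo s 1 ∧ Fin.tail t ∈ orderedSimplex k (t 0) := by
  conv_lhs => rw [← Fin.cons_self_tail t]
  simp only [orderedSimplex, mem_ofPred_eq, Fin.strictMono_cons, Fin.forall_fin_succ,
    Fin.cons_zero, Fin.cons_succ, mem_Ioo]
  constructor
  · rintro ⟨⟨h0, htail⟩, hlt, hmono⟩
    exact ⟨h0, fun i => ⟨hlt i, (htail i).2⟩, hmono⟩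
  · rintro ⟨h0, htail, hmono⟩
    exact ⟨⟨h0, fun i => ⟨h0.1.trans (htail i).1, (htail i).2⟩⟩,
      fun i => (htail i).1, hmono⟩

lemma measurableSet : MeasurableSet (orderedSimplex k s) := by
  simp only [orderedSimplex, StrictMono, ofPred_and, ofPred_forall]
  refine .inter (.iInter fun i => .inter ?_ ?_)
    (.iInter fun i => .iInter fun j => .iInter fun _ => ?_)
  all_goals exact measurableSet_lt (by fun_prop) (by fun_prop)

lemma integrableOn {E : Type*} [NormedAddCommGroup E] {f : (Fin k → ℝ) → E}
    (hf : Continuous f) : IntegrableOn f (orderedSimplex k s) :=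
  (hf.continuousOn.integrableOn_compact isCompact_Icc).mono_set subset_Icc

end orderedSimplex

def orderedSimplexFibred (k : ℕ) (s : ℝ) : Set (ℝ × (Fin k → ℝ)) :=
  {q | q.1 ∈ Ioo s 1 ∧ q.2 ∈ orderedSimplex k q.1}

namespace orderedSimplexFibred

variable {E : Type*} [NormedAddCommGroup E] {k : ℕ} {s : ℝ}

lemma preimage_piFinSuccAbove :
    MeasurableEquiv.piFinSuccAbove (fun _ => ℝ) 0 ⁻¹' orderedSimplexFibred k s =
      orderedSimplex (k + 1) s :=
  ext fun _ => orderedSimplex.mem_succ.symm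

lemma measurableSet : MeasurableSet (orderedSimplexFibred k s) := by
  rw [← (MeasurableEquiv.piFinSuccAbove (fun _ => ℝ) 0).measurableSet_preimage,
    preimage_piFinSuccAbove]
  exact orderedSimplex.measurableSet

lemma integrable_indicator {f : ℝ × (Fin k → ℝ) → E} (hf : Continuous f) :
    Integrable ((orderedSimplexFibred k s).indicator f) := by
  have hmp := volume_preserving_piFinSuccAbove (fun _ : Fin (k + 1) => ℝ) 0
  refine (integrable_indicator_iff measurableSet).mpr ?_
  rw [← hmp.integrableOn_comp_preimage (MeasurableEquiv.measurableEmbedding _),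
    preimage_piFinSuccAbove]
  exact orderedSimplex.integrableOn
    (hf.comp ((continuous_apply 0).prodMk (by fun_prop : Continuous (@Fin.tail k fun _ => ℝ))))

lemma integral_indicator_fiber [NormedSpace ℝ E] (f : ℝ × (Fin k → ℝ) → E) (u : ℝ) :
    ∫ y, (orderedSimplexFibred k s).indicator f (u, y) =
      (Ioo s 1).indicator (fun u => ∫ y in orderedSimplex k u, f (u, y)) u := by
  by_cases hu : u ∈ Ioo s 1
  · rw [indicator_of_mem hu, ← integral_indicator orderedSimplex.measurableSet]
    congr 1 with y
    by_cases hy : y ∈ orderedSimplex k u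
    · have huy : (u, y) ∈ orderedSimplexFibred k s := ⟨hu, hy⟩
      rw [indicator_of_mem hy, indicator_of_mem huy]
    · rw [indicator_of_notMem hy, indicator_of_notMem fun h => hy h.2]
  · have hnot : ∀ y, (u, y) ∉ orderedSimplexFibred k s := fun _ h => hu h.1
    simp [indicator_of_notMem (hnot _), indicator_of_notMem hu]

end orderedSimplexFibred

namespace orderedSimplex

variable {E : Type*} [NormedAddCommGroup E] [NormedSpace ℝ E] {k : ℕ} {s : ℝ}

theorem setIntegral_succ {f : ℝ × (Fin k → ℝ) → E} (hf : Continuous f) :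
    ∫ t in orderedSimplex (k + 1) s, f (t 0, Fin.tail t) =
      ∫ u in Ioo s 1, ∫ y in orderedSimplex k u, f (u, y) := by
  have hmp := volume_preserving_piFinSuccAbove (fun _ : Fin (k + 1) => ℝ) 0
  change ∫ t in _, f (MeasurableEquiv.piFinSuccAbove (fun _ => ℝ) 0 t) = _
  rw [← orderedSimplexFibred.preimage_piFinSuccAbove,
    hmp.setIntegral_preimage_emb (MeasurableEquiv.measurableEmbedding _),
    ← integral_indicator orderedSimplexFibred.measurableSet, Measure.volume_eq_prod,
    integral_prod _ (orderedSimplexFibred.integrable_indicator hf)]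
  simp only [orderedSimplexFibred.integral_indicator_fiber]
  exact integral_indicator measurableSet_Ioo

theorem integrableOn_setIntegral {f : ℝ × (Fin k → ℝ) → E} (hf : Continuous f) :
    IntegrableOn (fun u => ∫ y in orderedSimplex k u, f (u, y)) (Ioo s 1) := by
  have := (orderedSimplexFibred.integrable_indicator (s := s) hf).integral_prod_left
  simp only [orderedSimplexFibred.integral_indicator_fiber] at this
  exact (integrable_indicator_iff measurableSet_Ioo).mp this

end orderedSimplex

theorem measureReal_orderedSimplex (k : ℕ) {s : ℝ} (hs : s ≤ 1) :
    volume.real (orderedSimplex k s) = (1 - s) ^ k / k ! := by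
  induction k generalizing s with
  | zero => simp [orderedSimplex.zero_eq_univ, measureReal_def, volume_pi]
  | succ k ih =>
    have hpeel := orderedSimplex.setIntegral_succ (s := s)
      (continuous_const : Continuous fun _ : ℝ × (Fin k → ℝ) => (1 : ℝ))
    simp only [setIntegral_const, smul_eq_mul, mul_one] at hpeel
    rw [hpeel, setIntegral_congr_fun measurableSet_Ioo fun u hu => ih hu.2.le,
      ← integral_Ioc_eq_integral_Ioo, ← intervalIntegral.integral_of_le hs,
      intervalIntegral.integral_div, intervalIntegral.integral_comp_sub_left (· ^ k),
      integral_pow, Nat.factorial_succ]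
    push_cast
    field_simp
    ring

section ExpSmul

variable {𝔸 : Type*} [NormedRing 𝔸] [NormedAlgebra ℝ 𝔸] [CompleteSpace 𝔸]

lemma hasDerivAt_exp_smul_comp {f : ℝ → ℝ} {f' u : ℝ} (hf : HasDerivAt f f' u) (C : 𝔸) :
    HasDerivAt (fun u => exp (f u • C)) (f' • (C * exp (f u • C))) u :=
  (hasDerivAt_exp_smul_const' C (f u)).scomp u hf

lemma continuous_exp_smul (C : 𝔸) : Continuous fun u : ℝ => exp (u • C) :=
  continuous_iff_continuousAt.2 fun u => (hasDerivAt_exp_smul_const C u).continuousAt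

theorem exp_one_sub_smul_add_eq_add_integral (A B : 𝔸) {s : ℝ} (hs : s ≤ 1) :
    exp ((1 - s) • (A + B)) = exp ((1 - s) • A) +
      ∫ u in Ioo s 1, exp ((u - s) • A) * B * exp ((1 - u) • (A + B)) := by
  have hderiv : ∀ u, HasDerivAt (fun u : ℝ => exp ((u - s) • A) * exp ((1 - u) • (A + B)))
      (-(exp ((u - s) • A) * B * exp ((1 - u) • (A + B)))) u := by
    intro u
    refine ((hasDerivAt_exp_smul_comp ((hasDerivAt_id u).sub_const s) A).mul
      (hasDerivAt_exp_smul_comp ((hasDerivAt_id u).const_sub 1) (A + B))).congr_deriv ?_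
    rw [((Commute.refl A).smul_right (id u - s)).exp_right.eq, one_smul, neg_one_smul]
    simp only [id]
    noncomm_ring
  have hcont : Continuous fun u : ℝ => exp ((u - s) • A) * B * exp ((1 - u) • (A + B)) :=
    (((continuous_exp_smul A).comp (by fun_prop)).mul continuous_const).mul
      ((continuous_exp_smul (A + B)).comp (by fun_prop))
  have hftc := intervalIntegral.integral_eq_sub_of_hasDerivAt (fun u _ => hderiv u)
    (hcont.neg.intervalIntegrable s 1)
  rw [intervalIntegral.integral_neg, intervalIntegral.integral_of_le hs,
    integral_Ioc_eq_integral_Ioo] at hftc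
  simp only [sub_self, zero_smul, exp_zero, one_mul, mul_one] at hftc
  rw [neg_eq_iff_eq_neg.mp hftc]
  abel

end ExpSmul

section ExpChain

variable {𝔸 : Type*} [NormedRing 𝔸] [NormedAlgebra ℝ 𝔸]

/-- `expChain A B C k t s = e^{(t₀-s)A} B e^{(t₁-t₀)A} B ⋯ B e^{(1-t_{k-1})C}`. -/
noncomputable def expChain (A B C : 𝔸) : (k : ℕ) → (Fin k → ℝ) → ℝ → 𝔸
  | 0, _, s => exp ((1 - s) • C)
  | k + 1, t, s => exp ((t 0 - s) • A) * B * expChain A B C k (Fin.tail t) (t 0)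

noncomputable def expChainIntegral (A B C : 𝔸) (k : ℕ) (s : ℝ) : 𝔸 :=
  ∫ t in orderedSimplex k s, expChain A B C k t s

variable (A B C : 𝔸)

theorem norm_expChain_le {K : ℝ} (hA : ∀ u ∈ Icc (0 : ℝ) 1, ‖exp (u • A)‖ ≤ K)
    (hC : ∀ u ∈ Icc (0 : ℝ) 1, ‖exp (u • C)‖ ≤ K) (k : ℕ) {s : ℝ}
    (hs : s ∈ Icc (0 : ℝ) 1) {t : Fin k → ℝ} (ht : t ∈ orderedSimplex k s) :
    ‖expChain A B C k t s‖ ≤ K * (K * ‖B‖) ^ k := by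
  induction k generalizing s with
  | zero => simpa [expChain] using hC (1 - s) ⟨by linarith [hs.2], by linarith [hs.1]⟩
  | succ k ih =>
    obtain ⟨ht0, htail⟩ := orderedSimplex.mem_succ.mp ht
    have hK : 0 ≤ K := (norm_nonneg _).trans (hC 0 ⟨le_rfl, zero_le_one⟩)
    calc ‖exp ((t 0 - s) • A) * B * expChain A B C k (Fin.tail t) (t 0)‖
        ≤ ‖exp ((t 0 - s) • A)‖ * ‖B‖ * ‖expChain A B C k (Fin.tail t) (t 0)‖ :=
          norm_mul₃_le
      _ ≤ K * ‖B‖ * (K * (K * ‖B‖) ^ k) := by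
          gcongr
          · exact hA _ ⟨by linarith [ht0.1], by linarith [ht0.2, hs.1]⟩
          · exact ih ⟨by linarith [hs.1, ht0.1], ht0.2.le⟩ htail
      _ = K * (K * ‖B‖) ^ (k + 1) := by ring

variable [CompleteSpace 𝔸]

lemma continuous_expChain (k : ℕ) :
    Continuous fun p : ℝ × (Fin k → ℝ) => expChain A B C k p.2 p.1 := by
  induction k with
  | zero => exact (continuous_exp_smul C).comp (by fun_prop)
  | succ k ih =>
    have htail : Continuous fun p : ℝ × (Fin (k + 1) → ℝ) => (p.2 0, Fin.tail p.2) := by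
      fun_prop
    exact (((continuous_exp_smul A).comp (by fun_prop)).mul continuous_const).mul (ih.comp htail)

lemma integrableOn_expChain (k : ℕ) (s : ℝ) :
    IntegrableOn (fun t => expChain A B C k t s) (orderedSimplex k s) :=
  orderedSimplex.integrableOn
    ((continuous_expChain A B C k).comp (continuous_const.prodMk continuous_id))

lemma continuous_exp_smul_mul_expChain (k : ℕ) (s : ℝ) :
    Continuous fun p : ℝ × (Fin k → ℝ) =>
      exp ((p.1 - s) • A) * B * expChain A B C k p.2 p.1 :=
  (((continuous_exp_smul A).comp (by fun_prop)).mul continuous_const).mul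
    (continuous_expChain A B C k)

lemma expChainIntegral_zero (s : ℝ) : expChainIntegral A B C 0 s = exp ((1 - s) • C) := by
  simp [expChainIntegral, expChain, orderedSimplex.zero_eq_univ, measureReal_def, volume_pi]

lemma expChainIntegral_succ (k : ℕ) (s : ℝ) :
    expChainIntegral A B C (k + 1) s =
      ∫ u in Ioo s 1, exp ((u - s) • A) * B * expChainIntegral A B C k u := by
  refine (orderedSimplex.setIntegral_succ (continuous_exp_smul_mul_expChain A B C k s)).trans ?_
  refine setIntegral_congr_fun measurableSet_Ioo fun u _ => ?_
  exact integral_const_mul_of_integrable (c := exp ((u - s) • A) * B)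
    (integrableOn_expChain A B C k u)

lemma integrableOn_expChainIntegral (k : ℕ) (s : ℝ) :
    IntegrableOn (fun u => exp ((u - s) • A) * B * expChainIntegral A B C k u) (Ioo s 1) := by
  refine (orderedSimplex.integrableOn_setIntegral
    (continuous_exp_smul_mul_expChain A B C k s)).congr_fun (fun u _ => ?_) measurableSet_Ioo
  exact integral_const_mul_of_integrable (c := exp ((u - s) • A) * B)
    (integrableOn_expChain A B C k u)

theorem expChainIntegral_add_eq (k : ℕ) {s : ℝ} (hs : s ≤ 1) :
    expChainIntegral A B (A + B) k s =
      expChainIntegral A B A k s + expChainIntegral A B (A + B) (k + 1) s := by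
  induction k generalizing s with
  | zero =>
    rw [expChainIntegral_zero, expChainIntegral_zero, expChainIntegral_succ]
    simp only [expChainIntegral_zero]
    exact exp_one_sub_smul_add_eq_add_integral A B hs
  | succ k ih =>
    rw [expChainIntegral_succ A B (A + B) k, expChainIntegral_succ A B A k,
      expChainIntegral_succ A B (A + B) (k + 1),
      ← integral_add (integrableOn_expChainIntegral A B A k s)
        (integrableOn_expChainIntegral A B (A + B) (k + 1) s)]
    refine setIntegral_congr_fun measurableSet_Ioo fun u hu => ?_
    rw [ih hu.2.le, mul_add]

theorem exists_integral_norm_expChain_le : ∃ K : ℝ, ∀ k : ℕ,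
    ∫ t in orderedSimplex k 0, ‖expChain A B C k t 0‖ ≤ K * (K * ‖B‖) ^ k / k ! := by
  obtain ⟨KA, hKA⟩ :=
    isCompact_Icc.exists_bound_of_continuousOn (continuous_exp_smul A).continuousOn
  obtain ⟨KC, hKC⟩ :=
    isCompact_Icc.exists_bound_of_continuousOn (continuous_exp_smul C).continuousOn
  refine ⟨max KA KC, fun k => ?_⟩
  calc ∫ t in orderedSimplex k 0, ‖expChain A B C k t 0‖
      ≤ ∫ _ in orderedSimplex k 0, max KA KC * (max KA KC * ‖B‖) ^ k :=
        setIntegral_mono_on (integrableOn_expChain A B C k 0).norm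
          (orderedSimplex.integrableOn continuous_const) orderedSimplex.measurableSet
          fun t ht => norm_expChain_le A B C (fun u hu => (hKA u hu).trans (le_max_left _ _))
            (fun u hu => (hKC u hu).trans (le_max_right _ _)) k ⟨le_rfl, zero_le_one⟩ ht
    _ = max KA KC * (max KA KC * ‖B‖) ^ k / k ! := by
        rw [setIntegral_const, measureReal_orderedSimplex k zero_le_one, smul_eq_mul]
        ring

theorem summable_integral_norm_expChain :
    Summable fun k => ∫ t in orderedSimplex k 0, ‖expChain A B C k t 0‖ := by
  obtain ⟨K, hK⟩ := exists_integral_norm_expChain_le A B C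
  refine .of_nonneg_of_le (fun k => integral_nonneg fun _ => norm_nonneg _) hK ?_
  simpa only [mul_div_assoc] using (Real.summable_pow_div_factorial (K * ‖B‖)).mul_left K

theorem summable_norm_expChainIntegral : Summable fun k => ‖expChainIntegral A B C k 0‖ :=
  (summable_integral_norm_expChain A B C).of_nonneg_of_le (fun _ => norm_nonneg _)
    fun _ => norm_integral_le_integral_norm _

theorem exp_add_eq_sum_add_expChainIntegral (N : ℕ) :
    exp (A + B) =
      ∑ k ∈ Finset.range N, expChainIntegral A B A k 0 + expChainIntegral A B (A + B) N 0 := by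
  induction N with
  | zero => simp [expChainIntegral_zero]
  | succ N ih =>
    rw [Finset.sum_range_succ, ih, expChainIntegral_add_eq A B N zero_le_one, add_assoc]

theorem hasSum_expChainIntegral : HasSum (fun k => expChainIntegral A B A k 0) (exp (A + B)) := by
  refine (hasSum_iff_tendsto_nat_of_summable_norm (summable_norm_expChainIntegral A B A)).mpr ?_
  have hrem : Tendsto (fun N => expChainIntegral A B (A + B) N 0) atTop (𝓝 0) :=
    tendsto_zero_iff_norm_tendsto_zero.mpr
      (summable_norm_expChainIntegral A B (A + B)).tendsto_atTop_zero
  have hlim := (tendsto_const_nhds (x := exp (A + B))).sub hrem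
  rw [sub_zero] at hlim
  exact hlim.congr fun N =>
    (eq_sub_of_add_eq (exp_add_eq_sum_add_expChainIntegral A B N).symm).symm

end ExpChain

theorem duhamelChain_eq_expChain {n : ℕ} (A B : Matrix (Fin n) (Fin n) ℂ) (k : ℕ)
    (t : Fin k → ℝ) (s : ℝ) :
    duhamelChain A B k (fun i => if h : i < k then t ⟨i, h⟩ else 0) s =
      expChain A B A k t s := by
  induction k generalizing s with
  | zero => rfl
  | succ k ih =>
    have hshift : (fun i => if h : i + 1 < k + 1 then t ⟨i + 1, h⟩ else 0) =
        fun i => if h : i < k then Fin.tail t ⟨i, h⟩ else 0 := by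
      funext i
      by_cases h : i < k
      · simp [h, Fin.tail]
      · simp [h]
    simp only [duhamelChain, hshift, ih, dif_pos k.succ_pos]
    rfl

theorem duhamel_expansion {n : ℕ} (A B : Matrix (Fin n) (Fin n) ℂ) :
    Summable (fun k : ℕ => ∫ t in duhamelSimplex k, ‖duhamelIntegrand A B k t‖) ∧
    NormedSpace.exp (A + B) =
      ∑' k : ℕ, ∫ t in duhamelSimplex k, duhamelIntegrand A B k t := by
  have hchain : ∀ k t, duhamelIntegrand A B k t = expChain A B A k t 0 :=
    fun k t => duhamelChain_eq_expChain A B k t 0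
  simp only [hchain]
  exact ⟨summable_integral_norm_expChain A B A, (hasSum_expChainIntegral A B).tsum_eq.symm⟩
end

section
/- For self-adjoint n×n matrices A and B with B positive semidefinite, Tr e^{A+B} ≥ Tr e^{A}. -/
/-!
Shifting `A` by a real scalar `r` multiplies both traces by `exp r`, so we may assume `A ≥ 0`.
For positive semidefinite `P` and `Q` the exponential series then compare term by term:
the derivative of `t ↦ Tr (P + t Q)^k` is a sum of terms `Tr (X^a Q X^b) = Tr (X^(a+b) Q)`
with `X = P + t Q ≥ 0` for `t ≥ 0`, and the trace of a product of two positive semidefinite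
matrices is nonnegative.
-/

open Matrix
open scoped ComplexOrder

attribute [local instance] Matrix.linftyOpNormedRing Matrix.linftyOpNormedAlgebra

open NormedSpace

theorem ContinuousLinearMap.map_exp_le_of_map_pow_le {𝔸 : Type*} [NormedRing 𝔸]
    [NormedAlgebra ℝ 𝔸] [CompleteSpace 𝔸] (L : 𝔸 →L[ℝ] ℝ) {x y : 𝔸}
    (h : ∀ k : ℕ, L (x ^ k) ≤ L (y ^ k)) :
    L (exp x) ≤ L (exp y) :=
  hasSum_le (fun k => by simpa only [map_smul, smul_eq_mul] using
      mul_le_mul_of_nonneg_left (h k) (by positivity))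
    ((exp_series_hasSum_exp' (𝕂 := ℝ) x).mapL L)
    ((exp_series_hasSum_exp' (𝕂 := ℝ) y).mapL L)

theorem NormedSpace.exp_add_algebraMap {𝔸 : Type*} [NormedRing 𝔸] [NormedAlgebra ℚ 𝔸]
    [NormedAlgebra ℝ 𝔸] [CompleteSpace 𝔸] (x : 𝔸) (r : ℝ) :
    exp (x + algebraMap ℝ 𝔸 r) = Real.exp r • exp x := by
  rw [exp_add_of_commute (Algebra.commute_algebraMap_right r x), ← algebraMap_exp_comm,
    ← Real.exp_eq_exp_ℝ, Algebra.algebraMap_eq_smul_one, mul_smul_comm, mul_one]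

namespace Matrix

variable {ι 𝕜 : Type*} [Fintype ι] [RCLike 𝕜]

variable (ι 𝕜) in
noncomputable def reTraceCLM : Matrix ι ι 𝕜 →L[ℝ] ℝ :=
  LinearMap.toContinuousLinearMap (RCLike.reLm ∘ₗ traceLinearMap ι ℝ 𝕜)

@[simp]
theorem reTraceCLM_apply (X : Matrix ι ι 𝕜) : reTraceCLM ι 𝕜 X = RCLike.re X.trace := rfl

variable [DecidableEq ι]

open scoped MatrixOrder in
theorem PosSemidef.re_trace_mul_nonneg {P Q : Matrix ι ι 𝕜} (hP : P.PosSemidef)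
    (hQ : Q.PosSemidef) : 0 ≤ RCLike.re (P * Q).trace := by
  set S := CFC.sqrt P
  have hS : Sᴴ = S := (CFC.sqrt_nonneg P).posSemidef.isHermitian.eq
  have hSS : S * S = P := CFC.sqrt_mul_sqrt_self P hP.nonneg
  have h : (P * Q).trace = (S * Q * Sᴴ).trace := by
    rw [hS, trace_mul_cycle, hSS]
  rw [h]
  exact (RCLike.nonneg_iff.mp (hQ.mul_mul_conjTranspose_same S).trace_nonneg).1

theorem PosSemidef.re_trace_pow_mul_pow_nonneg {X Q : Matrix ι ι 𝕜} (hX : X.PosSemidef)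
    (hQ : Q.PosSemidef) (a b : ℕ) : 0 ≤ RCLike.re (X ^ a * Q * X ^ b).trace := by
  rw [trace_mul_cycle, ← pow_add]
  exact (hX.pow _).re_trace_mul_nonneg hQ

theorem PosSemidef.re_trace_pow_le_re_trace_add_pow {P Q : Matrix ι ι 𝕜} (hP : P.PosSemidef)
    (hQ : Q.PosSemidef) (k : ℕ) : RCLike.re (P ^ k).trace ≤ RCLike.re ((P + Q) ^ k).trace := by
  set X : ℝ → Matrix ι ι 𝕜 := fun t => P + t • Q
  have hX : ∀ t, HasDerivAt X Q t := fun t => by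
    have h := ((hasDerivAt_id t).smul_const Q).const_add P
    rw [one_smul] at h
    exact h
  have hderiv : ∀ t, HasDerivAt (fun t => reTraceCLM ι 𝕜 (X t ^ k))
      (reTraceCLM ι 𝕜 (∑ i ∈ Finset.range k, X t ^ (k.pred - i) * Q * X t ^ i)) t :=
    fun t => (reTraceCLM ι 𝕜).hasFDerivAt.comp_hasDerivAt t ((hX t).fun_pow' k)
  have hmono : MonotoneOn (fun t => reTraceCLM ι 𝕜 (X t ^ k)) (Set.Ici 0) := by
    refine monotoneOn_of_hasDerivWithinAt_nonneg (convex_Ici 0)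
      (fun t _ => (hderiv t).continuousAt.continuousWithinAt)
      (fun t _ => (hderiv t).hasDerivWithinAt) fun t ht => ?_
    have hXt : (X t).PosSemidef := hP.add (hQ.smul (interior_subset ht : (0 : ℝ) ≤ t))
    rw [map_sum]
    exact Finset.sum_nonneg fun i _ => hXt.re_trace_pow_mul_pow_nonneg hQ _ _
  simpa [X] using hmono (Set.mem_Ici.mpr le_rfl) (Set.mem_Ici.mpr zero_le_one) zero_le_one

theorem PosSemidef.re_trace_exp_le_re_trace_exp_add {P Q : Matrix ι ι 𝕜} (hP : P.PosSemidef)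
    (hQ : Q.PosSemidef) : RCLike.re (exp P).trace ≤ RCLike.re (exp (P + Q)).trace :=
  (reTraceCLM ι 𝕜).map_exp_le_of_map_pow_le (hP.re_trace_pow_le_re_trace_add_pow hQ)

open scoped MatrixOrder in
theorem IsHermitian.exists_posSemidef_sub_algebraMap {A : Matrix ι ι 𝕜} (hA : A.IsHermitian) :
    ∃ r : ℝ, (A - algebraMap ℝ _ r).PosSemidef := by
  obtain ⟨r, hr⟩ := (Set.finite_range hA.eigenvalues).bddBelow
  refine ⟨r, sub_nonneg.mpr (algebraMap_le_of_le_spectrum fun x hx => ?_) |>.posSemidef⟩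
  rw [hA.spectrum_real_eq_range_eigenvalues] at hx
  exact hr hx

theorem re_trace_exp_add_algebraMap (X : Matrix ι ι 𝕜) (r : ℝ) :
    RCLike.re (exp (X + algebraMap ℝ _ r)).trace = Real.exp r * RCLike.re (exp X).trace := by
  rw [show exp (X + algebraMap ℝ _ r) = Real.exp r • exp X from exp_add_algebraMap X r,
    trace_smul, RCLike.smul_re]

end Matrix

theorem trace_exp_monotone_psd {n : ℕ} (A B : Matrix (Fin n) (Fin n) ℂ)
    (hA : A.IsHermitian) (hB : B.PosSemidef) :
    (Matrix.trace (NormedSpace.exp A)).re ≤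
      (Matrix.trace (NormedSpace.exp (A + B))).re := by
  obtain ⟨r, hr⟩ := hA.exists_posSemidef_sub_algebraMap
  set A₀ := A - algebraMap ℝ _ r with hA₀
  calc (exp A).trace.re = RCLike.re (exp (A₀ + algebraMap ℝ _ r)).trace := by
        rw [sub_add_cancel]; rfl
    _ = Real.exp r * RCLike.re (exp A₀).trace := re_trace_exp_add_algebraMap _ _
    _ ≤ Real.exp r * RCLike.re (exp (A₀ + B)).trace :=
        mul_le_mul_of_nonneg_left (hr.re_trace_exp_le_re_trace_exp_add hB) (Real.exp_pos r).le
    _ = RCLike.re (exp (A₀ + B + algebraMap ℝ _ r)).trace :=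
        (re_trace_exp_add_algebraMap _ _).symm
    _ = (exp (A + B)).trace.re := by
        rw [add_right_comm, hA₀, sub_add_cancel]; rfl
end

section
/- Bogolubov's inequality: for operators A, B, H on a finite-dimensional Hilbert space with H self-adjoint and β > 0, |Tr([A,B] e^{-βH})|² ≤ (β/2)·Tr((AA* + A*A) e^{-βH}) · Tr([[B,H],B*] e^{-βH}). -/
/-!
Diagonalise `H = U D U*` with `D = diag(d)`; conjugation by `U` preserves all three traces, so
we may take `H = D`. Writing `f i = exp (-β d i)`, the three traces become
`Σ A_ij B_ji (f_i - f_j)`, `Σ |A_ij|² (f_i + f_j)` and `Σ |B_ij|² (d_j - d_i)(f_i - f_j)`.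
The scalar inequality `(eˣ - eʸ)² ≤ (x - y)(eˣ - eʸ)(eˣ + eʸ)/2` (equivalently, `tanh s ≤ s` for
`s ≥ 0`) bounds `(f_i - f_j)²` by the product of the two weights, and a weighted
Cauchy–Schwarz inequality over the pairs `(i, j)` finishes the proof.
-/

open Matrix

namespace Real

theorem two_mul_exp_sub_one_le {t : ℝ} (ht : 0 ≤ t) : 2 * (exp t - 1) ≤ t * (exp t + 1) := by
  let g : ℝ → ℝ := fun s => s * (exp s + 1) - 2 * (exp s - 1)
  have hg : ∀ s, HasDerivAt g ((s - 1) * exp s + 1) s := fun s => by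
    have := ((hasDerivAt_id s).mul ((hasDerivAt_exp s).add_const 1)).sub
      (((hasDerivAt_exp s).sub_const 1).const_mul 2)
    exact this.congr_deriv (by simp only [id]; ring)
  have hg_mono : Monotone g := monotone_of_deriv_nonneg (fun s => (hg s).differentiableAt)
    fun s => by
      rw [(hg s).deriv]
      have := mul_le_mul_of_nonneg_right (add_one_le_exp (-s)) (exp_pos s).le
      rw [← exp_add, neg_add_cancel, exp_zero] at this
      linarith
  simpa [g] using hg_mono ht

theorem sq_exp_sub_exp_le (x y : ℝ) :
    (exp x - exp y) ^ 2 ≤ (x - y) * (exp x - exp y) * (exp x + exp y) / 2 := by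
  wlog hyx : y ≤ x generalizing x y
  · linarith [this y x (le_of_not_ge hyx)]
  have hx : exp x = exp (x - y) * exp y := by rw [← exp_add, sub_add_cancel]
  have h := two_mul_exp_sub_one_le (sub_nonneg.2 hyx)
  have h1 : 0 ≤ exp (x - y) - 1 := by linarith [add_one_le_exp (x - y), sub_nonneg.2 hyx]
  rw [hx]
  nlinarith [mul_le_mul_of_nonneg_left h (mul_nonneg h1 (sq_nonneg (exp y)))]

end Real

theorem norm_sum_mul_mul_sq_le {ι 𝕜 : Type*} [SeminormedRing 𝕜] (s : Finset ι) (u v c : ι → 𝕜)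
    {x y : ι → ℝ} (hx : ∀ i ∈ s, 0 ≤ x i) (hy : ∀ i ∈ s, 0 ≤ y i)
    (hc : ∀ i ∈ s, ‖c i‖ ^ 2 ≤ x i * y i) :
    ‖∑ i ∈ s, u i * v i * c i‖ ^ 2 ≤
      (∑ i ∈ s, ‖u i‖ ^ 2 * x i) * ∑ i ∈ s, ‖v i‖ ^ 2 * y i := by
  calc ‖∑ i ∈ s, u i * v i * c i‖ ^ 2 ≤ (∑ i ∈ s, ‖u i‖ * ‖v i‖ * ‖c i‖) ^ 2 := by
        gcongr
        exact (norm_sum_le _ _).trans (Finset.sum_le_sum fun i _ => norm_mul₃_le)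
    _ ≤ _ := by
        refine Finset.sum_sq_le_sum_mul_sum_of_sq_le_mul s
          (fun i hi => mul_nonneg (sq_nonneg _) (hx i hi))
          (fun i hi => mul_nonneg (sq_nonneg _) (hy i hi)) fun i hi => ?_
        calc (‖u i‖ * ‖v i‖ * ‖c i‖) ^ 2 = ‖u i‖ ^ 2 * ‖v i‖ ^ 2 * ‖c i‖ ^ 2 := by ring
          _ ≤ ‖u i‖ ^ 2 * ‖v i‖ ^ 2 * (x i * y i) := by gcongr; exact hc i hi
          _ = ‖u i‖ ^ 2 * x i * (‖v i‖ ^ 2 * y i) := by ring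

theorem Complex.re_mul_star_mul_ofReal (z : ℂ) (r : ℝ) : (z * star z * r).re = ‖z‖ ^ 2 * r := by
  rw [Complex.star_def, Complex.mul_conj', ← Complex.ofReal_pow, ← Complex.ofReal_mul,
    Complex.ofReal_re]

namespace Matrix

variable {ι : Type*} [Fintype ι] [DecidableEq ι]

section CommRing

variable {R : Type*} [CommRing R]

theorem trace_mul_mul_diagonal (A B : Matrix ι ι R) (f : ι → R) :
    (A * B * diagonal f).trace = ∑ i, ∑ j, A i j * B j i * f i := by
  simp only [trace, diag, mul_diagonal]
  simp only [mul_apply, Finset.sum_mul]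

theorem trace_commutator_mul_diagonal (A B : Matrix ι ι R) (f : ι → R) :
    ((A * B - B * A) * diagonal f).trace = ∑ i, ∑ j, A i j * B j i * (f i - f j) := by
  rw [sub_mul, trace_sub, trace_mul_mul_diagonal, trace_mul_mul_diagonal,
    Finset.sum_comm (f := fun i j => B i j * A j i * f i), ← Finset.sum_sub_distrib]
  refine Finset.sum_congr rfl fun i _ => ?_
  rw [← Finset.sum_sub_distrib]
  exact Finset.sum_congr rfl fun j _ => by ring

theorem trace_anticommutator_mul_diagonal (A B : Matrix ι ι R) (f : ι → R) :
    ((A * B + B * A) * diagonal f).trace = ∑ i, ∑ j, A i j * B j i * (f i + f j) := by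
  rw [add_mul, trace_add, trace_mul_mul_diagonal, trace_mul_mul_diagonal,
    Finset.sum_comm (f := fun i j => B i j * A j i * f i), ← Finset.sum_add_distrib]
  refine Finset.sum_congr rfl fun i _ => ?_
  rw [← Finset.sum_add_distrib]
  exact Finset.sum_congr rfl fun j _ => by ring

theorem commutator_diagonal_apply (B : Matrix ι ι R) (d : ι → R) (i j : ι) :
    (B * diagonal d - diagonal d * B) i j = B i j * (d j - d i) := by
  simp only [sub_apply, mul_diagonal, diagonal_mul]
  ring

theorem trace_conjStarAlgAut [StarRing R] {S : Type*} [SMul S (Matrix ι ι R)]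
    [IsScalarTower S (Matrix ι ι R) (Matrix ι ι R)]
    [SMulCommClass S (Matrix ι ι R) (Matrix ι ι R)] (U : unitary (Matrix ι ι R))
    (X : Matrix ι ι R) :
    (Unitary.conjStarAlgAut S _ U X).trace = X.trace := by
  rw [Unitary.conjStarAlgAut_apply, trace_mul_cycle, Unitary.coe_star_mul_self, one_mul]

end CommRing

theorem re_trace_anticommutator_conjTranspose_mul_diagonal (A : Matrix ι ι ℂ) (f : ι → ℝ) :
    ((A * Aᴴ + Aᴴ * A) * diagonal fun i => (f i : ℂ)).trace.re =
      ∑ i, ∑ j, ‖A i j‖ ^ 2 * (f i + f j) := by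
  simp only [trace_anticommutator_mul_diagonal, conjTranspose_apply, Complex.re_sum,
    ← Complex.ofReal_add, Complex.re_mul_star_mul_ofReal]

theorem re_trace_commutator_commutator_diagonal_mul_diagonal (B : Matrix ι ι ℂ) (d f : ι → ℝ) :
    let D : Matrix ι ι ℂ := diagonal fun i => (d i : ℂ)
    (((B * D - D * B) * Bᴴ - Bᴴ * (B * D - D * B)) * diagonal fun i => (f i : ℂ)).trace.re =
      ∑ i, ∑ j, ‖B i j‖ ^ 2 * ((d j - d i) * (f i - f j)) := by
  simp only [trace_commutator_mul_diagonal, commutator_diagonal_apply, conjTranspose_apply,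
    Complex.re_sum]
  refine Finset.sum_congr rfl fun i _ => Finset.sum_congr rfl fun j _ => ?_
  rw [show B i j * ((d j : ℂ) - d i) * star (B i j) * ((f i : ℂ) - f j) =
    B i j * star (B i j) * ((d j - d i) * (f i - f j) : ℝ) by push_cast; ring,
    Complex.re_mul_star_mul_ofReal]

theorem exp_conjStarAlgAut {S 𝔸 : Type*} [NormedRing 𝔸] [StarRing 𝔸] [NormedAlgebra ℚ 𝔸]
    [CompleteSpace 𝔸] [SMul S (Matrix ι ι 𝔸)] [IsScalarTower S (Matrix ι ι 𝔸) (Matrix ι ι 𝔸)]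
    [SMulCommClass S (Matrix ι ι 𝔸) (Matrix ι ι 𝔸)] (U : unitary (Matrix ι ι 𝔸))
    (X : Matrix ι ι 𝔸) :
    NormedSpace.exp (Unitary.conjStarAlgAut S _ U X) =
      Unitary.conjStarAlgAut S _ U (NormedSpace.exp X) :=
  exp_units_conj (Unitary.toUnits U) X

theorem exp_diagonal_ofReal (x : ι → ℝ) :
    NormedSpace.exp (diagonal fun i => (x i : ℂ)) = diagonal fun i => (Real.exp (x i) : ℂ) := by
  rw [exp_diagonal]
  congr 1 with i
  rw [Pi.coe_exp, ← Complex.exp_eq_exp_ℂ, Complex.ofReal_exp]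

end Matrix

theorem bogolubov_inequality_of_eq_diagonal {ι : Type*} [Fintype ι] [DecidableEq ι]
    (A B H : Matrix ι ι ℂ) (d : ι → ℝ) (hH : H = diagonal fun i => (d i : ℂ)) {β : ℝ}
    (hβ : 0 ≤ β) :
    ‖((A * B - B * A) * NormedSpace.exp ((-β) • H)).trace‖ ^ 2 ≤
      (β / 2) * (((A * Aᴴ + Aᴴ * A) * NormedSpace.exp ((-β) • H)).trace).re *
        ((((B * H - H * B) * Bᴴ - Bᴴ * (B * H - H * B)) *
            NormedSpace.exp ((-β) • H)).trace).re := by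
  set f : ι → ℝ := fun i => Real.exp (-β * d i) with hf
  have hexp : NormedSpace.exp ((-β) • H) = diagonal fun i => (f i : ℂ) := by
    rw [hH, ← diagonal_smul, ← exp_diagonal_ofReal]
    congr 2 with i
    simp
  rw [hexp, trace_commutator_mul_diagonal, re_trace_anticommutator_conjTranspose_mul_diagonal, hH,
    re_trace_commutator_commutator_diagonal_mul_diagonal]
  have hf_sq_le : ∀ i j, (f i - f j) ^ 2 ≤ (β / 2 * (f i + f j)) * ((d i - d j) * (f j - f i)) :=
    fun i j => by
      have := Real.sq_exp_sub_exp_le (-β * d i) (-β * d j)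
      simp only [hf]
      linarith
  have hweight_nonneg : ∀ i j, 0 ≤ (d i - d j) * (f j - f i) := fun i j => by
    rcases le_total (d i) (d j) with hij | hij
    · exact mul_nonneg_of_nonpos_of_nonpos (by linarith)
        (sub_nonpos.2 (Real.exp_le_exp.2 (by nlinarith)))
    · exact mul_nonneg (by linarith) (sub_nonneg.2 (Real.exp_le_exp.2 (by nlinarith)))
  have hCS := norm_sum_mul_mul_sq_le (Finset.univ : Finset (ι × ι)) (fun p => A p.1 p.2)
    (fun p => B p.2 p.1) (fun p => (f p.1 : ℂ) - f p.2)
    (x := fun p => β / 2 * (f p.1 + f p.2)) (y := fun p => (d p.1 - d p.2) * (f p.2 - f p.1))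
    (fun p _ => by positivity) (fun p _ => hweight_nonneg p.1 p.2) fun p _ => by
      rw [← Complex.ofReal_sub, Complex.norm_real, Real.norm_eq_abs, sq_abs]
      exact hf_sq_le p.1 p.2
  simp only [Fintype.sum_prod_type] at hCS
  refine hCS.trans (le_of_eq ?_)
  congr 1
  · simp only [Finset.mul_sum]
    exact Finset.sum_congr rfl fun i _ => Finset.sum_congr rfl fun j _ => by ring
  · exact Finset.sum_comm

attribute [local instance] Matrix.linftyOpNormedRing Matrix.linftyOpNormedAlgebra

theorem bogolubov_inequality {n : ℕ}
    (A B H : Matrix (Fin n) (Fin n) ℂ) (hH : H.IsHermitian) (β : ℝ) (hβ : 0 < β) :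
    ‖((A * B - B * A) * NormedSpace.exp ((-β) • H)).trace‖ ^ 2 ≤
      (β / 2) * (((A * Aᴴ + Aᴴ * A) * NormedSpace.exp ((-β) • H)).trace).re *
        ((((B * H - H * B) * Bᴴ - Bᴴ * (B * H - H * B)) *
            NormedSpace.exp ((-β) • H)).trace).re := by
  obtain ⟨U, d, rfl⟩ : ∃ (U : unitary (Matrix (Fin n) (Fin n) ℂ)) (d : Fin n → ℝ),
      H = Unitary.conjStarAlgAut ℂ _ U (diagonal fun i => (d i : ℂ)) :=
    ⟨_, _, hH.spectral_theorem⟩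
  obtain ⟨A, rfl⟩ : ∃ A', A = Unitary.conjStarAlgAut ℂ _ U A' :=
    ⟨_, (StarAlgEquiv.apply_symm_apply _ A).symm⟩
  obtain ⟨B, rfl⟩ : ∃ B', B = Unitary.conjStarAlgAut ℂ _ U B' :=
    ⟨_, (StarAlgEquiv.apply_symm_apply _ B).symm⟩
  rw [← Complex.coe_smul, ← map_smul, exp_conjStarAlgAut]
  simp only [← star_eq_conjTranspose, ← map_star, ← map_mul, ← map_sub, ← map_add,
    trace_conjStarAlgAut, Complex.coe_smul]
  exact bogolubov_inequality_of_eq_diagonal A B _ d rfl hβ.le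
end
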